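/- Let V be a real subspace of ℂ^n with Kähler-angle decomposition V = V_1 ⊕ ⋯ ⊕ V_r, and let A be a complex-linear isometric automorphism of ℂ^n such that A(V) = V. Then A(V_i) = V_i for every i = 1, …, r, and A(ℂV_i ⊖ V_i) = ℂV_i ⊖ V_i for every i. -/

import Mathlib

/-!
Let `T = π_V ∘ J`. Complex orthogonality of the factors makes `T` preserve each `V_i`, where it
agrees with `π_{V_i} ∘ J`; since `T` is skew on `V`, the polarized Kähler-angle condition gives
`T² = -cos² φ_i` on `V_i`. The values `cos² φ_i` are distinct, so `V_i` is exactly the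
`-cos² φ_i`-eigenspace of `T²` inside `V`. A unitary `A` preserving `V` commutes with `J` and
with `π_V`, hence with `T`, so it preserves these eigenspaces; it then preserves `ℂV_i` and,
being a real isometry, `V_iᗮ`.
-/
noncomputable section

/-- `ℂ^n` as a Euclidean space. -/
abbrev En (n : ℕ) : Type := EuclideanSpace ℂ (Fin n)

/-- The complex structure `J`, multiplication by `i`. -/
def Jc {n : ℕ} (x : En n) : En n := Complex.I • x

/-- A real subspace `V` of `ℂ^n` has constant Kähler angle `φ` if
`‖π_V (J v)‖² = cos²(φ) ‖v‖²` for all `v ∈ V`. -/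
def HasConstKahlerAngle {n : ℕ} (V : Submodule ℝ (En n)) (φ : ℝ) : Prop :=
  ∀ v ∈ V, ‖(V.orthogonalProjection (Jc v) : En n)‖ ^ 2 = Real.cos φ ^ 2 * ‖v‖ ^ 2

/-- The complex span of a real subspace of `ℂ^n`, viewed as a real subspace. -/
def CSpan {n : ℕ} (V : Submodule ℝ (En n)) : Submodule ℝ (En n) :=
  (Submodule.span ℂ (V : Set (En n))).restrictScalars ℝ

open Real

section Orthogonal

variable {E : Type*} [NormedAddCommGroup E] [InnerProductSpace ℝ E] {ι : Type*}

theorem Submodule.mem_of_mem_iSup_of_inner_eq_zero {Vs : ι → Submodule ℝ E}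
    (horth : Pairwise fun i j => Vs i ⟂ Vs j) {i : ι} {x : E} (hx : x ∈ ⨆ j, Vs j)
    (hxo : ∀ j ≠ i, ∀ w ∈ Vs j, inner ℝ x w = 0) : x ∈ Vs i := by
  rw [iSup_split_single Vs i] at hx
  obtain ⟨a, ha, b, hb, rfl⟩ := Submodule.mem_sup.1 hx
  have hW : (⨆ (j) (_ : j ≠ i), Vs j) ≤ (ℝ ∙ (a + b))ᗮ := iSup₂_le fun j hj w hw =>
    Submodule.mem_orthogonal_singleton_iff_inner_right.2 (hxo j hj w hw)
  have hxb : inner ℝ (a + b) b = 0 := Submodule.mem_orthogonal_singleton_iff_inner_right.1 (hW hb)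
  have hiW : Vs i ⟂ ⨆ (j) (_ : j ≠ i), Vs j :=
    Submodule.isOrtho_iSup_right.2 fun j => Submodule.isOrtho_iSup_right.2 fun hj =>
      horth (Ne.symm hj)
  have hb0 : b = 0 := by
    rw [inner_add_left, hiW.inner_eq ha hb, zero_add] at hxb
    exact inner_self_eq_zero.1 hxb
  rwa [hb0, add_zero]

theorem real_inner_map_map_of_norm_sq_eq {F : Type*} [NormedAddCommGroup F]
    [InnerProductSpace ℝ F] (f : E →ₗ[ℝ] F) {U : Submodule ℝ E} {c : ℝ}
    (hf : ∀ x ∈ U, ‖f x‖ ^ 2 = c * ‖x‖ ^ 2) {v w : E} (hv : v ∈ U) (hw : w ∈ U) :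
    inner ℝ (f v) (f w) = c * inner ℝ v w := by
  have hvw := hf (v + w) (U.add_mem hv hw)
  rw [map_add, norm_add_sq_real, norm_add_sq_real, hf v hv, hf w hw] at hvw
  linarith

end Orthogonal

theorem Module.End.iSup_inf_eigenspace_le {K M ι : Type*} [Field K] [AddCommGroup M]
    [Module K M] (f : Module.End K M) {Vs : ι → Submodule K M} {μ : ι → K}
    (hμ : Function.Injective μ) (hVs : ∀ j, Vs j ≤ f.eigenspace (μ j)) (i : ι) :
    (⨆ j, Vs j) ⊓ f.eigenspace (μ i) ≤ Vs i := by
  rintro x ⟨hx, hxμ⟩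
  rw [SetLike.mem_coe, iSup_split_single Vs i] at hx
  obtain ⟨a, ha, b, hb, rfl⟩ := Submodule.mem_sup.1 hx
  have hbμ : b ∈ f.eigenspace (μ i) := by
    simpa using Submodule.sub_mem _ hxμ (hVs i ha)
  have hW : (⨆ (j) (_ : j ≠ i), Vs j) ≤ ⨆ ν ∈ {ν | ν ≠ μ i}, f.eigenspace ν :=
    iSup₂_le fun j hj => (hVs j).trans (le_iSup₂_of_le (μ j) (hμ.ne hj) le_rfl)
  have hb0 : b = 0 :=
    Submodule.disjoint_def.1 (f.eigenspaces_iSupIndep.disjoint_biSup (by simp)) b hbμ (hW hb)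
  rwa [hb0, add_zero]

theorem Real.injOn_cos_sq : Set.InjOn (fun x => cos x ^ 2) (Set.Icc 0 (π / 2)) := by
  intro x hx y hy hxy
  have hcos : ∀ z ∈ Set.Icc 0 (π / 2), 0 ≤ cos z := fun z hz =>
    cos_nonneg_of_mem_Icc ⟨by linarith [hz.1, pi_pos], hz.2⟩
  have hsub : Set.Icc 0 (π / 2) ⊆ Set.Icc 0 π := Set.Icc_subset_Icc_right (by linarith [pi_pos])
  exact injOn_cos (hsub hx) (hsub hy) ((sq_eq_sq₀ (hcos x hx) (hcos y hy)).1 hxy)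

namespace KahlerAngle

variable {n : ℕ}

/-- Mathlib's `real_inner_eq_re_inner` is about `Inner.rclikeToReal`, whereas the real inner
product on `En n` is the `PiLp` one. -/
theorem real_inner_eq_re_inner (v w : En n) : inner ℝ v w = (inner ℂ v w).re := by
  simp only [PiLp.inner_apply, Complex.re_sum]
  rfl

theorem real_inner_Jc_left (v w : En n) : inner ℝ (Jc v) w = -inner ℝ v (Jc w) := by
  simp [real_inner_eq_re_inner, Jc, Complex.mul_re]

theorem pairwise_isOrtho_of_inner_eq_zero {ι : Type*} {Vs : ι → Submodule ℝ (En n)}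
    (hherm : Pairwise fun i j => ∀ v ∈ Vs i, ∀ w ∈ Vs j, inner ℂ v w = 0) :
    Pairwise fun i j => Vs i ⟂ Vs j := fun i j hij =>
  Submodule.isOrtho_iff_inner_eq.2 fun v hv w hw => by
    rw [real_inner_eq_re_inner, hherm hij v hv w hw, Complex.zero_re]

def kahlerOp (V : Submodule ℝ (En n)) : Module.End ℝ (En n) :=
  V.starProjection.toLinearMap ∘ₗ (Complex.I • LinearMap.id)

variable {V : Submodule ℝ (En n)}

theorem kahlerOp_apply (x : En n) : kahlerOp V x = V.starProjection (Jc x) := rfl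

theorem kahlerOp_mem (x : En n) : kahlerOp V x ∈ V := V.starProjection_apply_mem _

theorem real_inner_kahlerOp_of_mem (x : En n) {y : En n} (hy : y ∈ V) :
    inner ℝ (kahlerOp V x) y = inner ℝ (Jc x) y := by
  rw [kahlerOp_apply, Submodule.inner_starProjection_left_eq_right,
    Submodule.starProjection_eq_self_iff.2 hy]

theorem real_inner_kahlerOp_left {x y : En n} (hx : x ∈ V) (hy : y ∈ V) :
    inner ℝ (kahlerOp V x) y = -inner ℝ x (kahlerOp V y) := by
  rw [real_inner_kahlerOp_of_mem x hy, real_inner_Jc_left, real_inner_comm (kahlerOp V y),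
    real_inner_kahlerOp_of_mem y hx, real_inner_comm]

section Decomposition

variable {ι : Type*} {Vs : ι → Submodule ℝ (En n)} (hsum : V = ⨆ i, Vs i)
  (hherm : Pairwise fun i j => ∀ v ∈ Vs i, ∀ w ∈ Vs j, inner ℂ v w = 0)
include hsum hherm

theorem kahlerOp_mem_of_mem {i : ι} {v : En n} (hv : v ∈ Vs i) : kahlerOp V v ∈ Vs i := by
  refine Submodule.mem_of_mem_iSup_of_inner_eq_zero (pairwise_isOrtho_of_inner_eq_zero hherm)
    (hsum ▸ kahlerOp_mem v) fun j hj w hw => ?_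
  have hwV : w ∈ V := hsum ▸ Submodule.mem_iSup_of_mem j hw
  rw [real_inner_kahlerOp_of_mem v hwV, real_inner_eq_re_inner, Jc, inner_smul_left,
    hherm (Ne.symm hj) v hv w hw, mul_zero, Complex.zero_re]

theorem kahlerOp_eq_starProjection {i : ι} {v : En n} (hv : v ∈ Vs i) :
    kahlerOp V v = (Vs i).starProjection (Jc v) := by
  have hle : Vs i ≤ V := hsum ▸ le_iSup Vs i
  refine (Submodule.eq_starProjection_of_mem_of_inner_eq_zero
    (kahlerOp_mem_of_mem hsum hherm hv) fun w hw => ?_).symm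
  exact Submodule.starProjection_inner_eq_zero (Jc v) w (hle hw)

theorem le_eigenspace_kahlerOp_sq {i : ι} {φ : ℝ} (hangle : HasConstKahlerAngle (Vs i) φ) :
    Vs i ≤ (kahlerOp V ^ 2).eigenspace (-cos φ ^ 2) := by
  intro v hv
  have hle : Vs i ≤ V := hsum ▸ le_iSup Vs i
  have hT : ∀ x ∈ Vs i, kahlerOp V x ∈ Vs i := fun x hx => kahlerOp_mem_of_mem hsum hherm hx
  have hnorm : ∀ x ∈ Vs i, ‖kahlerOp V x‖ ^ 2 = cos φ ^ 2 * ‖x‖ ^ 2 := fun x hx => by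
    rw [kahlerOp_eq_starProjection hsum hherm hx]
    exact hangle x hx
  set d := kahlerOp V (kahlerOp V v) + cos φ ^ 2 • v
  have hd : d ∈ Vs i := (Vs i).add_mem (hT _ (hT v hv)) ((Vs i).smul_mem _ hv)
  have hdperp : ∀ w ∈ Vs i, inner ℝ d w = 0 := fun w hw => by
    rw [inner_add_left, real_inner_kahlerOp_left (kahlerOp_mem v) (hle hw),
      real_inner_map_map_of_norm_sq_eq (kahlerOp V) hnorm hv hw, real_inner_smul_left]
    ring
  rw [Module.End.mem_eigenspace_iff, pow_two, Module.End.mul_apply, neg_smul,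
    eq_neg_iff_add_eq_zero]
  exact inner_self_eq_zero.1 (hdperp d hd)

theorem eq_inf_eigenspace_kahlerOp_sq {φ : ι → ℝ} (hφ : ∀ i, φ i ∈ Set.Icc 0 (π / 2))
    (hφinj : Function.Injective φ) (hangle : ∀ i, HasConstKahlerAngle (Vs i) (φ i)) (i : ι) :
    Vs i = V ⊓ (kahlerOp V ^ 2).eigenspace (-cos (φ i) ^ 2) := by
  have hμ : Function.Injective fun j => -cos (φ j) ^ 2 := fun j k hjk =>
    hφinj (injOn_cos_sq (hφ j) (hφ k) (neg_inj.1 hjk))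
  have hVs : ∀ j, Vs j ≤ (kahlerOp V ^ 2).eigenspace (-cos (φ j) ^ 2) := fun j =>
    le_eigenspace_kahlerOp_sq hsum hherm (hangle j)
  exact le_antisymm (le_inf (hsum ▸ le_iSup Vs i) (hVs i))
    ((inf_le_inf_right _ hsum.le).trans ((kahlerOp V ^ 2).iSup_inf_eigenspace_le hμ hVs i))

end Decomposition

section Unitary

variable (A : En n ≃ₗᵢ[ℂ] En n)

def realIsometry : En n ≃ₗᵢ[ℝ] En n :=
  { A.toLinearEquiv.restrictScalars ℝ with norm_map' := A.norm_map }

variable {A}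

theorem map_realIsometry {W : Submodule ℝ (En n)} (hW : ⇑A '' W = W) :
    W.map ((realIsometry A).toLinearEquiv : En n →ₗ[ℝ] En n) = W :=
  SetLike.coe_injective (by rw [Submodule.map_coe]; exact hW)

theorem image_orthogonal {W : Submodule ℝ (En n)} (hW : ⇑A '' W = W) :
    ⇑A '' (Wᗮ : Submodule ℝ (En n)) = Wᗮ := by
  have h := Submodule.map_orthogonal_equiv W (realIsometry A)
  rw [map_realIsometry hW] at h
  conv_rhs => rw [← h]
  rw [Submodule.map_coe]
  rfl

theorem image_cSpan {W : Submodule ℝ (En n)} (hW : ⇑A '' W = W) :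
    ⇑A '' (CSpan W : Set (En n)) = CSpan W := by
  calc ⇑A '' (CSpan W : Set (En n))
      = Submodule.map (A.toLinearEquiv : En n →ₗ[ℂ] En n) (Submodule.span ℂ W) :=
        (Submodule.map_coe _ _).symm
    _ = CSpan W := by rw [Submodule.map_span]; exact congrArg _ (congrArg _ hW)

theorem kahlerOp_apply_unitary (hA : ⇑A '' V = V) (x : En n) :
    kahlerOp V (A x) = A (kahlerOp V x) := by
  have h := Submodule.starProjection_map_apply (realIsometry A) V (A (Jc x))
  simp only [map_realIsometry hA] at h
  rw [kahlerOp_apply, kahlerOp_apply, Jc, Jc, ← map_smul]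
  exact h.trans (congrArg _ (congrArg _ (A.symm_apply_apply _)))

theorem mapsTo_inf_eigenspace_kahlerOp_sq (hA : ⇑A '' V = V) (μ : ℝ) :
    Set.MapsTo A (V ⊓ (kahlerOp V ^ 2).eigenspace μ : Submodule ℝ (En n))
      (V ⊓ (kahlerOp V ^ 2).eigenspace μ : Submodule ℝ (En n)) := by
  rintro x ⟨hxV, hxμ⟩
  refine ⟨hA ▸ Set.mem_image_of_mem A hxV, ?_⟩
  rw [SetLike.mem_coe, Module.End.mem_eigenspace_iff] at hxμ ⊢
  rw [pow_two, Module.End.mul_apply, kahlerOp_apply_unitary hA, kahlerOp_apply_unitary hA,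
    ← Module.End.mul_apply, ← pow_two, hxμ]
  exact (realIsometry A).map_smul μ x

theorem image_inf_eigenspace_kahlerOp_sq (hA : ⇑A '' V = V) (μ : ℝ) :
    ⇑A '' (V ⊓ (kahlerOp V ^ 2).eigenspace μ : Submodule ℝ (En n)) =
      (V ⊓ (kahlerOp V ^ 2).eigenspace μ : Submodule ℝ (En n)) := by
  have hA' : ⇑A.symm '' V = V := by
    conv_lhs => rw [← hA]
    rw [Set.image_image]
    simp
  refine (mapsTo_inf_eigenspace_kahlerOp_sq hA μ).image_subset.antisymm fun y hy => ?_
  exact ⟨A.symm y, mapsTo_inf_eigenspace_kahlerOp_sq hA' μ hy, A.apply_symm_apply y⟩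

end Unitary

end KahlerAngle

theorem unitary_preserves_kahler_factors_general (n : ℕ)
    (V : Submodule ℝ (En n)) (r : ℕ)
    (Vs : Fin r → Submodule ℝ (En n)) (φ : Fin r → ℝ)
    (hφ : ∀ i, 0 ≤ φ i ∧ φ i ≤ Real.pi / 2)
    (hφmono : StrictMono φ)
    (hsum : V = ⨆ i, Vs i)
    (hangle : ∀ i, HasConstKahlerAngle (Vs i) (φ i))
    (hherm : ∀ i j, i ≠ j → ∀ v ∈ Vs i, ∀ w ∈ Vs j, (inner ℂ v w : ℂ) = 0)
    (A : En n ≃ₗᵢ[ℂ] En n)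
    (hA : ⇑A '' (V : Set (En n)) = (V : Set (En n))) :
    (∀ i, ⇑A '' (Vs i : Set (En n)) = (Vs i : Set (En n))) ∧
    (∀ i, ⇑A '' ((CSpan (Vs i) ⊓ (Vs i)ᗮ : Submodule ℝ (En n)) : Set (En n))
        = ((CSpan (Vs i) ⊓ (Vs i)ᗮ : Submodule ℝ (En n)) : Set (En n))) := by
  have hVs : ∀ i, ⇑A '' (Vs i : Set (En n)) = Vs i := fun i => by
    rw [KahlerAngle.eq_inf_eigenspace_kahlerOp_sq hsum hherm hφ hφmono.injective hangle i]
    exact KahlerAngle.image_inf_eigenspace_kahlerOp_sq hA _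
  refine ⟨hVs, fun i => ?_⟩
  rw [Submodule.coe_inf, Set.image_inter A.injective, KahlerAngle.image_cSpan (hVs i),
    KahlerAngle.image_orthogonal (hVs i)]

/-- A unitary transformation of `ℂ^n` preserving a real subspace `V` preserves
each factor `V_i` of its Kähler-angle decomposition, as well as each
`ℂV_i ⊖ V_i`. -/
theorem unitary_preserves_kahler_factors (n : ℕ)
    (V : Submodule ℝ (En n)) (r : ℕ)
    (Vs : Fin r → Submodule ℝ (En n)) (φ : Fin r → ℝ)
    (hφ : ∀ i, 0 ≤ φ i ∧ φ i ≤ Real.pi / 2)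
    (hφmono : StrictMono φ)
    (hne : ∀ i, Vs i ≠ ⊥)
    (hsum : V = ⨆ i, Vs i)
    (horth : ∀ i j, i ≠ j → ∀ v ∈ Vs i, ∀ w ∈ Vs j, (inner ℝ v w : ℝ) = 0)
    (hangle : ∀ i, HasConstKahlerAngle (Vs i) (φ i))
    (hherm : ∀ i j, i ≠ j → ∀ v ∈ Vs i, ∀ w ∈ Vs j, (inner ℂ v w : ℂ) = 0)
    (A : En n ≃ₗᵢ[ℂ] En n)
    (hA : ⇑A '' (V : Set (En n)) = (V : Set (En n))) :
    (∀ i, ⇑A '' (Vs i : Set (En n)) = (Vs i : Set (En n))) ∧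
    (∀ i, ⇑A '' ((CSpan (Vs i) ⊓ (Vs i)ᗮ : Submodule ℝ (En n)) : Set (En n))
        = ((CSpan (Vs i) ⊓ (Vs i)ᗮ : Submodule ℝ (En n)) : Set (En n))) :=
  unitary_preserves_kahler_factors_general n V r Vs φ hφ hφmono hsum hangle hherm A hA
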